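/- The function g_{2,ω₀} in its explicit real form satisfies the boundary conditions g_{2,ω₀}(0) = 0, g_{2,ω₀}'(0) = 1, g_{2,ω₀}(1) = 0, and g_{2,ω₀}'(1) = 0. -/

import Mathlib

/-!
In the half-angle variables `S = sin (ω₀ / 2)`, `C = cos (ω₀ / 2)` one has `u = -2 S s` and
`v = 2 S (2 C + ω₀ S)`, so every denominator of `g_{2,ω₀}` is a product of `ω₀`, `S`, `s`
and `t`. Clearing denominators, each boundary condition becomes a polynomial identity in
`ω₀, S, C` modulo `S ^ 2 + C ^ 2 = 1`.
-/

open Real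

lemma sin_eq_two_mul_sin_half_mul_cos_half (w : ℝ) : sin w = 2 * sin (w / 2) * cos (w / 2) := by
  rw [← sin_two_mul, mul_div_cancel₀ w two_ne_zero]

lemma cos_eq_one_sub_two_mul_sin_half_sq (w : ℝ) : cos w = 1 - 2 * sin (w / 2) ^ 2 := by
  rw [← cos_two_mul_eq_one_sub, mul_div_cancel₀ w two_ne_zero]

lemma hasDerivAt_affine_sub_div {f : ℝ → ℝ} {f' a : ℝ} (A B D : ℝ)
    (hf : HasDerivAt f f' a) :
    HasDerivAt (fun x => A + B * x - f x / D) (B - f' / D) a :=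
  ((((hasDerivAt_id a).const_mul B).const_add A).sub (hf.div_const D)).congr_deriv (by ring)

lemma hasDerivAt_cos_mul_one_sub (w a : ℝ) :
    HasDerivAt (fun x => cos (w * (1 - x))) (w * sin (w * (1 - a))) a := by
  simpa [mul_comm] using (((hasDerivAt_id a).const_sub 1).const_mul w).cos

namespace G2

noncomputable def s (w : ℝ) : ℝ := 2 * sin (w / 2) - w * cos (w / 2)
noncomputable def t (w : ℝ) : ℝ := 2 * sin (w / 2) + w * cos (w / 2)
noncomputable def u (w : ℝ) : ℝ := w * sin w - 2 * (1 - cos w)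
noncomputable def v (w : ℝ) : ℝ := 2 * sin w + w * (1 - cos w)

noncomputable def g2 (w x : ℝ) : ℝ :=
  (sin w - w * cos w) / (w * u w) + (sin (w / 2) / s w) * x
    - (w ^ 2 * cos (w / 2) * cos (w * (1 - x))
        + sin (w / 2) * (sin (w * x) * u w - cos (w * x) * v w))
      / (2 * w * sin (w / 2) * s w * t w)

variable (w : ℝ)

lemma u_eq : u w = -2 * sin (w / 2) * s w := by
  rw [u, s, sin_eq_two_mul_sin_half_mul_cos_half w, cos_eq_one_sub_two_mul_sin_half_sq w]; ring

lemma v_eq : v w = 2 * sin (w / 2) * (2 * cos (w / 2) + w * sin (w / 2)) := by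
  rw [v, sin_eq_two_mul_sin_half_mul_cos_half w, cos_eq_one_sub_two_mul_sin_half_sq w]; ring

variable {w}

lemma ne_zero_of_u_ne_zero (hu : u w ≠ 0) : w ≠ 0 ∧ sin (w / 2) ≠ 0 ∧ s w ≠ 0 := by
  rw [u_eq] at hu
  have hS : sin (w / 2) ≠ 0 := fun h => hu (by rw [h]; ring)
  refine ⟨?_, hS, fun h => hu (by rw [h]; ring)⟩
  rintro rfl
  simp at hS

lemma g2_zero (hu : u w ≠ 0) (ht : t w ≠ 0) : g2 w 0 = 0 := by
  obtain ⟨hw, hS, hs⟩ := ne_zero_of_u_ne_zero hu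
  rw [g2, u_eq, v_eq]
  simp only [mul_zero, sub_zero, mul_one, sin_zero, cos_zero]
  field_simp
  rw [s, t, sin_eq_two_mul_sin_half_mul_cos_half w, cos_eq_one_sub_two_mul_sin_half_sq w]
  linear_combination (-2 * w * sin (w / 2)) * sin_sq_add_cos_sq (w / 2)

lemma g2_one (hu : u w ≠ 0) (ht : t w ≠ 0) : g2 w 1 = 0 := by
  obtain ⟨hw, hS, hs⟩ := ne_zero_of_u_ne_zero hu
  rw [g2, u_eq, v_eq]
  simp only [mul_one, sub_self, mul_zero, cos_zero]
  field_simp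
  rw [s, t, sin_eq_two_mul_sin_half_mul_cos_half w, cos_eq_one_sub_two_mul_sin_half_sq w]
  linear_combination (-2 * w * sin (w / 2) - 4 * w * sin (w / 2) ^ 3) * sin_sq_add_cos_sq (w / 2)

lemma hasDerivAt_g2 (w a : ℝ) :
    HasDerivAt (g2 w)
      (sin (w / 2) / s w - (w ^ 3 * cos (w / 2) * sin (w * (1 - a))
          + w * sin (w / 2) * (cos (w * a) * u w + sin (w * a) * v w))
        / (2 * w * sin (w / 2) * s w * t w)) a := by
  have hlin : HasDerivAt (fun x => w * x) w a := by
    simpa using (hasDerivAt_id a).const_mul w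
  have hnum := ((hasDerivAt_cos_mul_one_sub w a).const_mul (w ^ 2 * cos (w / 2))).add
    (((hlin.sin.mul_const (u w)).sub (hlin.cos.mul_const (v w))).const_mul (sin (w / 2)))
  exact (hasDerivAt_affine_sub_div _ _ _ hnum).congr_deriv (by ring)

lemma hasDerivAt_g2_zero (hu : u w ≠ 0) (ht : t w ≠ 0) : HasDerivAt (g2 w) 1 0 := by
  obtain ⟨hw, hS, hs⟩ := ne_zero_of_u_ne_zero hu
  refine (hasDerivAt_g2 w 0).congr_deriv ?_
  rw [u_eq, v_eq]
  simp only [mul_zero, sub_zero, mul_one, sin_zero, cos_zero]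
  field_simp
  rw [s, t, sin_eq_two_mul_sin_half_mul_cos_half w]
  ring

lemma hasDerivAt_g2_one (hu : u w ≠ 0) (ht : t w ≠ 0) : HasDerivAt (g2 w) 0 1 := by
  obtain ⟨hw, hS, hs⟩ := ne_zero_of_u_ne_zero hu
  refine (hasDerivAt_g2 w 1).congr_deriv ?_
  rw [u_eq, v_eq]
  simp only [mul_one, sub_self, mul_zero, sin_zero]
  field_simp
  rw [s, t, sin_eq_two_mul_sin_half_mul_cos_half w, cos_eq_one_sub_two_mul_sin_half_sq w]
  linear_combination (-8 * w * sin (w / 2) ^ 3) * sin_sq_add_cos_sq (w / 2)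

end G2

theorem g2_boundary_conditions_general (ω₀ : ℝ)
    (s t u v : ℝ)
    (hs : s = 2 * Real.sin (ω₀ / 2) - ω₀ * Real.cos (ω₀ / 2))
    (ht : t = 2 * Real.sin (ω₀ / 2) + ω₀ * Real.cos (ω₀ / 2))
    (hu : u = ω₀ * Real.sin ω₀ - 2 * (1 - Real.cos ω₀))
    (hv : v = 2 * Real.sin ω₀ + ω₀ * (1 - Real.cos ω₀))
    (ht0 : t ≠ 0) (hu0 : u ≠ 0)
    (g : ℝ → ℝ)
    (hg : ∀ x, g x = (Real.sin ω₀ - ω₀ * Real.cos ω₀) / (ω₀ * u)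
        + (Real.sin (ω₀ / 2) / s) * x
        - (ω₀ ^ 2 * Real.cos (ω₀ / 2) * Real.cos (ω₀ * (1 - x))
            + Real.sin (ω₀ / 2) * (Real.sin (ω₀ * x) * u - Real.cos (ω₀ * x) * v))
          / (2 * ω₀ * Real.sin (ω₀ / 2) * s * t)) :
    g 0 = 0 ∧ HasDerivAt g 1 0 ∧ g 1 = 0 ∧ HasDerivAt g 0 1 := by
  subst hs ht hu hv
  obtain rfl : g = G2.g2 ω₀ := funext hg
  exact ⟨G2.g2_zero hu0 ht0, G2.hasDerivAt_g2_zero hu0 ht0, G2.g2_one hu0 ht0,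
    G2.hasDerivAt_g2_one hu0 ht0⟩

theorem g2_boundary_conditions (ω₀ : ℝ) (hω₀ : ω₀ ∈ Set.Ioo 0 π)
    (s t u v : ℝ)
    (hs : s = 2 * Real.sin (ω₀ / 2) - ω₀ * Real.cos (ω₀ / 2))
    (ht : t = 2 * Real.sin (ω₀ / 2) + ω₀ * Real.cos (ω₀ / 2))
    (hu : u = ω₀ * Real.sin ω₀ - 2 * (1 - Real.cos ω₀))
    (hv : v = 2 * Real.sin ω₀ + ω₀ * (1 - Real.cos ω₀))
    (hs0 : s ≠ 0) (ht0 : t ≠ 0) (hu0 : u ≠ 0) (hv0 : v ≠ 0)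
    (g : ℝ → ℝ)
    (hg : ∀ x, g x = (Real.sin ω₀ - ω₀ * Real.cos ω₀) / (ω₀ * u)
        + (Real.sin (ω₀ / 2) / s) * x
        - (ω₀ ^ 2 * Real.cos (ω₀ / 2) * Real.cos (ω₀ * (1 - x))
            + Real.sin (ω₀ / 2) * (Real.sin (ω₀ * x) * u - Real.cos (ω₀ * x) * v))
          / (2 * ω₀ * Real.sin (ω₀ / 2) * s * t)) :
    g 0 = 0 ∧ HasDerivAt g 1 0 ∧ g 1 = 0 ∧ HasDerivAt g 0 1 :=
  g2_boundary_conditions_general ω₀ s t u v hs ht hu hv ht0 hu0 g hg
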